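/- arXiv:2208.11211 — 2 statements merged into one kernel-verified Lean document; each statement's English description precedes it below -/
import Mathlib

section
/- Let (F, d_Q, ω) and (F̃, d̃_Q, ω̃) be degree-k Poincaré complexes. Suppose f : F → F̃ and g : F̃ → F are chain maps, and H : F^• → F^{•−1}, H̃ : F̃^• → F̃^{•−1} are linear maps of degree −1 satisfying the chain homotopy relations d_Q H + H d_Q = id_F − g∘f and d̃_Q H̃ + H̃ d̃_Q = id_{F̃} − f∘g. Assume moreover that f preserves the pairings: ω̃(f(x), f(y)) = ω(x, y) for all x, y ∈ F. Define a degree-(k−1) bilinear form β̃ on F̃ by setting, for homogeneous x̃, ỹ ∈ F̃, β̃(x̃, ỹ) = (−1)^{k+1} [ ( ω̃(H̃ x̃, ỹ) + (−1)^{|x̃|+1} ω̃(x̃, H̃ ỹ) ) + (1/2)( −ω̃(H̃ x̃, H̃ d̃_Q ỹ) + (−1)^{|x̃|} ω̃(H̃ d̃_Q x̃, H̃ ỹ) ) − ω̃(H̃ x̃, d̃_Q H̃ ỹ) ]. Then for all homogeneous x̃, ỹ ∈ F̃ one has ω(g(x̃), g(ỹ)) = ω̃(x̃, ỹ) + (−1)^{k}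 ( β̃(d̃_Q x̃, ỹ) + (−1)^{|x̃|+1} β̃(x̃, d̃_Q ỹ) ). -/
/-!
Since `f ∘ g = id - Δ` with `Δ = d̃ H̃ + H̃ d̃`, and `f` preserves the pairings,
`ω(g x, g y) = ω̃(x - Δ x, y - Δ y)`. Expanding bilinearly and moving every `d̃` across `ω̃`
by `ω̃(d̃ x, y) = ± ω̃(x, d̃ y)`, the terms with `d̃ d̃` vanish and the remaining ones are exactly
the terms of `L_Q β̃ = ± (β̃(d̃ x, y) ± β̃(x, d̃ y))`; the two halves of `ω̃(H̃ d̃ x, H̃ d̃ y)`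
contributed by `β̃` add up to the one cross term of the expansion.
-/

section PoincareComplex

variable {k : ℤ} {E : ℤ → Type*} [∀ i, AddCommGroup (E i)] [∀ i, Module ℝ (E i)]

/-- The form `β̃` of the statement. -/
noncomputable def correctionForm (d : ∀ i j : ℤ, j = i + 1 → (E i →ₗ[ℝ] E j))
    (ω : ∀ i j : ℤ, i + j = -k → (E i →ₗ[ℝ] E j →ₗ[ℝ] ℝ))
    (H : ∀ i j : ℤ, j = i - 1 → (E i →ₗ[ℝ] E j))
    (i j : ℤ) (h : i + j = 1 - k) (x : E i) (y : E j) : ℝ :=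
  (-1 : ℝ) ^ (k+1) *
    ( ( ω (i-1) j (by linarith) (H i (i-1) rfl x) y
        + (-1 : ℝ) ^ (i+1) * ω i (j-1) (by linarith) x (H j (j-1) rfl y) )
      + (1/2) *
        ( - ω (i-1) j (by linarith) (H i (i-1) rfl x)
              (H (j+1) j (by linarith) (d j (j+1) rfl y))
          + (-1 : ℝ) ^ i * ω i (j-1) (by linarith)
              (H (i+1) i (by linarith) (d i (i+1) rfl x)) (H j (j-1) rfl y) )
      - ω (i-1) j (by linarith) (H i (i-1) rfl x)
          (d (j-1) j (by linarith) (H j (j-1) rfl y)) )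

variable {d : ∀ i j : ℤ, j = i + 1 → (E i →ₗ[ℝ] E j)}
  {ω : ∀ i j : ℤ, i + j = -k → (E i →ₗ[ℝ] E j →ₗ[ℝ] ℝ)}
  {H : ∀ i j : ℤ, j = i - 1 → (E i →ₗ[ℝ] E j)}

/- Degree arithmetic such as `a + 1 - 1 = a` is not definitional, so the lemmas below restate
the hypotheses with the neighbouring degrees as variables tied to `i` by equations. -/

theorem d_d_apply_of_eq
    (hd2 : ∀ i (x : E i), d (i+1) (i+2) (by linarith) (d i (i+1) rfl x) = 0)
    {i j l : ℤ} (hj : j = i + 1) (hl : l = j + 1) (x : E i) :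
    d j l hl (d i j hj x) = 0 := by
  obtain rfl : l = i + 2 := by linarith
  subst hj
  exact hd2 i x

theorem pairing_d_left_of_eq
    (hω_d : ∀ i j (h : i + 1 + j = -k) (h' : i + (j + 1) = -k) (x : E i) (y : E j),
      ω (i+1) j h (d i (i+1) rfl x) y = (-1 : ℝ) ^ i * ω i (j+1) h' x (d j (j+1) rfl y))
    {i iNext j jNext : ℤ} (hi : iNext = i + 1) (hj : jNext = j + 1) (h : iNext + j = -k)
    (h' : i + jNext = -k) (x : E i) (y : E j) :
    ω iNext j h (d i iNext hi x) y = (-1 : ℝ) ^ i * ω i jNext h' x (d j jNext hj y) := by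
  subst hi hj
  exact hω_d i j h h' x y

theorem correctionForm_eq_of_eq {i iPrev iNext j jPrev jNext : ℤ} (hiPrev : iPrev = i - 1)
    (hiNext : iNext = i + 1) (hjPrev : jPrev = j - 1) (hjNext : jNext = j + 1)
    (h : i + j = 1 - k) (x : E i) (y : E j) :
    correctionForm d ω H i j h x y = (-1 : ℝ) ^ (k+1) *
      ( ( ω iPrev j (by linarith) (H i iPrev hiPrev x) y
          + (-1 : ℝ) ^ (i+1) * ω i jPrev (by linarith) x (H j jPrev hjPrev y) )
        + (1/2) *
          ( - ω iPrev j (by linarith) (H i iPrev hiPrev x)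
                (H jNext j (by linarith) (d j jNext hjNext y))
            + (-1 : ℝ) ^ i * ω i jPrev (by linarith)
                (H iNext i (by linarith) (d i iNext hiNext x)) (H j jPrev hjPrev y) )
        - ω iPrev j (by linarith) (H i iPrev hiPrev x)
            (d jPrev j (by linarith) (H j jPrev hjPrev y)) ) := by
  subst hiPrev hiNext hjPrev hjNext
  rfl

theorem pairing_sub_homotopy
    (hd2 : ∀ i (x : E i), d (i+1) (i+2) (by linarith) (d i (i+1) rfl x) = 0)
    (hω_d : ∀ i j (h : i + 1 + j = -k) (h' : i + (j + 1) = -k) (x : E i) (y : E j),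
      ω (i+1) j h (d i (i+1) rfl x) y = (-1 : ℝ) ^ i * ω i (j+1) h' x (d j (j+1) rfl y))
    {β : ∀ i j : ℤ, i + j = 1 - k → (E i →ₗ[ℝ] E j →ₗ[ℝ] ℝ)}
    (hβ : ∀ i j (h : i + j = 1 - k) (x : E i) (y : E j),
      β i j h x y = correctionForm d ω H i j h x y)
    (a b : ℤ) (hab : a + b = -k) (x : E a) (y : E b) :
    ω a b hab
        (x - (d (a-1) a (by linarith) (H a (a-1) rfl x)
          + H (a+1) a (by linarith) (d a (a+1) rfl x)))
        (y - (d (b-1) b (by linarith) (H b (b-1) rfl y)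
          + H (b+1) b (by linarith) (d b (b+1) rfl y)))
      = ω a b hab x y + (-1 : ℝ) ^ k *
          ( β (a+1) b (by linarith) (d a (a+1) rfl x) y
            + (-1 : ℝ) ^ (a+1) * β a (b+1) (by linarith) x (d b (b+1) rfl y) ) := by
  rw [hβ, hβ,
    correctionForm_eq_of_eq (iPrev := a) (iNext := a+2) (jPrev := b-1) (jNext := b+1)
      (by linarith) (by linarith) (by linarith) rfl,
    correctionForm_eq_of_eq (iPrev := a-1) (iNext := a+1) (jPrev := b) (jNext := b+2)
      rfl rfl (by linarith) (by linarith),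
    hd2 a x, hd2 b y]
  have hdHx_y : ω a b hab (d (a-1) a (by linarith) (H a (a-1) rfl x)) y
      = (-1:ℝ)^(a-1) * ω (a-1) (b+1) (by linarith) (H a (a-1) rfl x) (d b (b+1) rfl y) :=
    pairing_d_left_of_eq hω_d (by linarith) rfl _ _ _ _
  have hdx_Hy : ω (a+1) (b-1) (by linarith) (d a (a+1) rfl x) (H b (b-1) rfl y)
      = (-1:ℝ)^a * ω a b hab x (d (b-1) b (by linarith) (H b (b-1) rfl y)) :=
    pairing_d_left_of_eq hω_d rfl (by linarith) _ _ _ _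
  have hdHx_dHy : ω a b hab (d (a-1) a (by linarith) (H a (a-1) rfl x))
        (d (b-1) b (by linarith) (H b (b-1) rfl y)) = 0 := by
    rw [pairing_d_left_of_eq hω_d (by linarith) rfl _ (by linarith : a - 1 + (b + 1) = -k),
      d_d_apply_of_eq hd2, map_zero, mul_zero]
  have hdHx_Hdy : ω a b hab (d (a-1) a (by linarith) (H a (a-1) rfl x))
        (H (b+1) b (by linarith) (d b (b+1) rfl y))
      = (-1:ℝ)^(a-1) * ω (a-1) (b+1) (by linarith) (H a (a-1) rfl x)
        (d b (b+1) rfl (H (b+1) b (by linarith) (d b (b+1) rfl y))) :=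
    pairing_d_left_of_eq hω_d (by linarith) rfl _ _ _ _
  simp only [map_zero, LinearMap.zero_apply, map_sub, map_add,
    LinearMap.sub_apply, LinearMap.add_apply, hdHx_y, hdx_Hy, hdHx_dHy, hdHx_Hdy]
  have hne : (-1:ℝ) ≠ 0 := by norm_num
  simp only [zpow_add_one₀ hne, zpow_sub_one₀ hne, inv_neg_one]
  rcases Int.even_or_odd a with ha | ha <;> rcases Int.even_or_odd k with hk | hk <;>
    simp only [ha.neg_one_zpow, hk.neg_one_zpow] <;> ring

end PoincareComplex

theorem fiber_product_weak_equivalence_symplectic_correction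
    (k : ℤ)
    (F : ℤ → Type*) [∀ i, AddCommGroup (F i)] [∀ i, Module ℝ (F i)]
    (Ft : ℤ → Type*) [∀ i, AddCommGroup (Ft i)] [∀ i, Module ℝ (Ft i)]
    -- the differentials (degree +1, squaring to zero)
    (dt : ∀ i j : ℤ, j = i + 1 → (Ft i →ₗ[ℝ] Ft j))
    (hdt2 : ∀ i (x : Ft i), dt (i+1) (i+2) (by omega) (dt i (i+1) rfl x) = 0)
    -- the degree-k pairings
    (ω : ∀ i j : ℤ, i + j = -k → (F i →ₗ[ℝ] F j →ₗ[ℝ] ℝ))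
    (ωt : ∀ i j : ℤ, i + j = -k → (Ft i →ₗ[ℝ] Ft j →ₗ[ℝ] ℝ))
    -- compatibility with the differential:  ω(d x, y) = (-1)^{|x|} ω(x, d y)
    (hωt_d : ∀ i j (h : i + 1 + j = -k) (h' : i + (j + 1) = -k) (x : Ft i) (y : Ft j),
        ωt (i+1) j h (dt i (i+1) rfl x) y = (-1 : ℝ) ^ i * ωt i (j+1) h' x (dt j (j+1) rfl y))
    -- chain maps f, g
    (f : ∀ i, F i →ₗ[ℝ] Ft i) (g : ∀ i, Ft i →ₗ[ℝ] F i)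
    -- chain homotopies:  dH + Hd = id - g f  and  dt Ht + Ht dt = id - f g
    (Ht : ∀ i j : ℤ, j = i - 1 → (Ft i →ₗ[ℝ] Ft j))
    (hHt : ∀ i (x : Ft i),
        dt (i-1) i (by omega) (Ht i (i-1) rfl x) + Ht (i+1) i (by omega) (dt i (i+1) rfl x)
          = x - f i (g i x))
    -- f preserves the pairings:  ωt(f x, f y) = ω(x, y)
    (hfω : ∀ i j (h : i + j = -k) (x : F i) (y : F j),
        ωt i j h (f i x) (f j y) = ω i j h x y)
    -- the degree-(k-1) bilinear form βt defined by the explicit formula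
    (βt : ∀ i j : ℤ, i + j = 1 - k → (Ft i →ₗ[ℝ] Ft j →ₗ[ℝ] ℝ))
    (hβ : ∀ i j (h : i + j = 1 - k) (x : Ft i) (y : Ft j),
        βt i j h x y = (-1 : ℝ) ^ (k+1) *
          ( ( ωt (i-1) j (by omega) (Ht i (i-1) rfl x) y
              + (-1 : ℝ) ^ (i+1) * ωt i (j-1) (by omega) x (Ht j (j-1) rfl y) )
            + (1/2) *
              ( - ωt (i-1) j (by omega) (Ht i (i-1) rfl x)
                    (Ht (j+1) j (by omega) (dt j (j+1) rfl y))
                + (-1 : ℝ) ^ i * ωt i (j-1) (by omega)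
                    (Ht (i+1) i (by omega) (dt i (i+1) rfl x)) (Ht j (j-1) rfl y) )
            - ωt (i-1) j (by omega) (Ht i (i-1) rfl x)
                (dt (j-1) j (by omega) (Ht j (j-1) rfl y)) )) :
    -- conclusion:  ω(g x, g y) = ωt(x, y) + (L_Q βt)(x, y)
    ∀ a b (h : a + b = -k) (x : Ft a) (y : Ft b),
      ω a b h (g a x) (g b y)
        = ωt a b h x y + (-1 : ℝ) ^ k *
            ( βt (a+1) b (by omega) (dt a (a+1) rfl x) y
              + (-1 : ℝ) ^ (a+1) * βt a (b+1) (by omega) x (dt b (b+1) rfl y) ) := by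
  intro a b hab x y
  have hfg : ∀ i (z : Ft i), f i (g i z)
      = z - (dt (i-1) i (by omega) (Ht i (i-1) rfl z) + Ht (i+1) i (by omega) (dt i (i+1) rfl z)) :=
    fun i z => by rw [hHt, sub_sub_cancel]
  rw [← hfω, hfg, hfg]
  exact pairing_sub_homotopy hdt2 hωt_d hβ a b hab x y
end

section
/- Let M be a finite-dimensional smooth (Hausdorff, σ-compact) manifold without boundary and U ⊆ M an open subset. Then there exists a function μ : M × M → ℝ and an open set V ⊆ M × M such that: (1) μ is smooth on (M × M) ∖ Diag_{fr U}, where fr U denotes the topological frontier of U and Diag_S := {(x,x) : x ∈ S}; (2) μ = 0 on the complement of U × U; (3) Diag_U ⊆ V ⊆ U × U and μ = 1 on V. -/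
open scoped Manifold

/-- Let `M` be a finite-dimensional smooth (Hausdorff, σ-compact) manifold without boundary
and `U ⊆ M` an open subset.  Then there is a function `μ : M × M → ℝ` and an open set
`V ⊆ M × M` such that: (1) `μ` is smooth on `(M × M) ∖ Diag_{fr U}`, where `fr U` is the
topological frontier of `U` and `Diag_S = {(x, x) : x ∈ S}`; (2) `μ = 0` off `U × U`;
(3) `Diag_U ⊆ V ⊆ U × U` and `μ = 1` on `V`. -/
theorem exists_bump_function_near_diagonal
    {E : Type*} [NormedAddCommGroup E] [NormedSpace ℝ E] [FiniteDimensional ℝ E]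
    {M : Type*} [TopologicalSpace M] [ChartedSpace E M]
    [IsManifold (𝓘(ℝ, E)) (⊤ : ℕ∞) M] [T2Space M] [SigmaCompactSpace M]
    (U : Set M) (hU : IsOpen U) :
    ∃ (μ : M × M → ℝ) (V : Set (M × M)),
      -- (1) μ is smooth away from the diagonal over the frontier of U
      ContMDiffOn ((𝓘(ℝ, E)).prod (𝓘(ℝ, E))) (𝓘(ℝ, ℝ)) (⊤ : ℕ∞) μ
        ({p : M × M | p.1 = p.2 ∧ p.1 ∈ frontier U}ᶜ)
      -- (2) μ vanishes outside U × U
      ∧ (∀ p : M × M, p ∉ U ×ˢ U → μ p = 0)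
      -- (3) V is an open set with Diag_U ⊆ V ⊆ U × U on which μ ≡ 1
      ∧ IsOpen V
      ∧ {p : M × M | p.1 = p.2 ∧ p.1 ∈ U} ⊆ V
      ∧ V ⊆ U ×ˢ U
      ∧ (∀ p ∈ V, μ p = 1) := by
  classical
  -- the bad diagonal set
  set D : Set (M × M) := {p : M × M | p.1 = p.2 ∧ p.1 ∈ frontier U} with hDdef
  have hDclosed : IsClosed D := by
    have : D = {p : M × M | p.1 = p.2} ∩ (Prod.fst ⁻¹' frontier U) := rfl
    rw [this]
    exact (isClosed_eq continuous_fst continuous_snd).inter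
      (isClosed_frontier.preimage continuous_fst)
  -- the open submanifold O = Dᶜ
  let O : TopologicalSpace.Opens (M × M) := ⟨Dᶜ, hDclosed.isOpen_compl⟩
  -- topological instances on M × M and O
  haveI := (𝓘(ℝ, E)).locallyCompactSpace
  haveI := ChartedSpace.locallyCompactSpace E M
  haveI := (𝓘(ℝ, E)).secondCountableTopology
  haveI := ChartedSpace.secondCountable_of_sigmaCompact E M
  haveI : LocallyCompactSpace ↥O := O.2.locallyCompactSpace
  haveI : SigmaCompactSpace ↥O := inferInstance
  haveI : TopologicalSpace.MetrizableSpace (M × M) :=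
    Manifold.metrizableSpace ((𝓘(ℝ, E)).prod (𝓘(ℝ, E))) (M × M)
  haveI : TopologicalSpace.MetrizableSpace ↥O := inferInstance
  letI : MetricSpace ↥O := TopologicalSpace.metrizableSpaceMetric ↥O
  -- the two disjoint closed subsets of O
  have hUU : IsOpen (U ×ˢ U) := hU.prod hU
  set s : Set ↥O := Subtype.val ⁻¹' (U ×ˢ U)ᶜ with hsdef
  set t : Set ↥O := Subtype.val ⁻¹' {p : M × M | p.1 = p.2 ∧ p.1 ∈ U} with htdef
  have hs : IsClosed s := hUU.isClosed_compl.preimage continuous_subtype_val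
  have ht : IsClosed t := by
    have : t = Subtype.val ⁻¹' ({p : M × M | p.1 = p.2} ∩ (Prod.fst ⁻¹' closure U)) := by
      ext ⟨p, hp⟩
      simp only [htdef, Set.mem_preimage, Set.mem_setOf_eq, Set.mem_inter_iff]
      constructor
      · rintro ⟨h1, h2⟩; exact ⟨h1, subset_closure h2⟩
      · rintro ⟨h1, h2⟩
        refine ⟨h1, ?_⟩
        have hpf : p.1 ∉ frontier U := fun hf => hp ⟨h1, hf⟩
        by_contra hpu
        exact hpf ⟨h2, by rwa [hU.interior_eq]⟩
    rw [this]
    exact (((isClosed_eq continuous_fst continuous_snd).inter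
      (isClosed_closure.preimage continuous_fst))).preimage continuous_subtype_val
  have hts : t ⊆ Subtype.val ⁻¹' (U ×ˢ U) := by
    rintro ⟨p, hp⟩ ⟨h1, h2⟩
    exact ⟨h2, h1 ▸ h2⟩
  have hd : Disjoint s t := by
    rw [Set.disjoint_left]
    intro q hq hq'
    exact hq (hts hq')
  -- the smooth cutoff on O
  obtain ⟨f, hf0, hf1, -⟩ :=
    exists_contMDiffMap_zero_one_nhds_of_isClosed ((𝓘(ℝ, E)).prod (𝓘(ℝ, E))) (n := (⊤ : ℕ∞)) hs ht hd
  obtain ⟨W, hWopen, htW, hfW⟩ := eventually_nhdsSet_iff_exists.1 hf1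
  -- define μ and V
  set μ : M × M → ℝ := fun p => if h : p ∈ Dᶜ then f ⟨p, h⟩ else 0 with hμdef
  set V : Set (M × M) := Subtype.val '' (W ∩ Subtype.val ⁻¹' (U ×ˢ U)) with hVdef
  refine ⟨μ, V, ?_, ?_, ?_, ?_, ?_, ?_⟩
  · -- smoothness of μ on Dᶜ
    intro p hp
    have hp' : p ∈ Dᶜ := hp
    have key : (fun q : ↥O => μ q.1) = fun q : ↥O => f q := by
      funext q
      exact dif_pos q.2
    have : ContMDiffAt ((𝓘(ℝ, E)).prod (𝓘(ℝ, E))) (𝓘(ℝ, ℝ)) (⊤ : ℕ∞) μ p := by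
      rw [← contMDiffAt_subtype_iff (U := O) (x := ⟨p, hp'⟩)]
      show ContMDiffAt _ _ _ (fun q : ↥O => μ q.1) _
      rw [key]
      exact f.contMDiff.contMDiffAt
    exact this.contMDiffWithinAt
  · -- vanishing off U × U
    intro p hp
    by_cases h : p ∈ Dᶜ
    · have hv : μ p = f ⟨p, h⟩ := dif_pos h
      rw [hv]
      exact hf0.self_of_nhdsSet _ hp
    · exact dif_neg h
  · exact O.2.isOpenMap_subtype_val _ (hWopen.inter (hUU.preimage continuous_subtype_val))
  · -- Diag_U ⊆ V
    rintro p ⟨h1, h2⟩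
    have hpD : p ∈ Dᶜ := by
      rintro ⟨-, hf⟩
      rw [hU.frontier_eq] at hf
      exact hf.2 h2
    exact ⟨⟨p, hpD⟩, ⟨htW ⟨h1, h2⟩, ⟨h2, h1 ▸ h2⟩⟩, rfl⟩
  · rintro q ⟨x, ⟨-, hx⟩, rfl⟩
    exact hx
  · rintro q ⟨x, ⟨hxW, -⟩, rfl⟩
    have hv : μ x.1 = f x := dif_pos x.2
    rw [hv]
    exact hfW x hxW
end
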